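/- arXiv:1810.04439 — 2 statements merged into one kernel-verified Lean document; each statement's English description precedes it below -/
import Mathlib

section
/- Let A be a nonsingular n×n (−1,1)-matrix (n ≥ 2). Then A can be transformed by standard transformations into an n×n (−1,1)-matrix B such that: (i) every entry of the first row and of the first column of B equals 1; (ii) the (n−1)×(n−1) submatrix of B obtained by deleting the first row and the first column has rank n−1 over ℚ; and (iii) |per A| = |per B|. -/
open Matrix

/-- The permanent of a square matrix. -/
def per {n : ℕ} (A : Matrix (Fin n) (Fin n) ℚ) : ℚ :=
  ∑ σ : Equiv.Perm (Fin n), ∏ i, A i (σ i)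

/-- `A` is obtained from `B` by standard transformations: a finite composition of row
permutations, column permutations, multiplications of rows/columns by `-1`, and
transposition (square case). -/
def StdEquiv {n : ℕ} (A B : Matrix (Fin n) (Fin n) ℚ) : Prop :=
  ∃ (ρ σ : Equiv.Perm (Fin n)) (ε δ : Fin n → ℚ),
    (∀ i, ε i = 1 ∨ ε i = -1) ∧ (∀ j, δ j = 1 ∨ δ j = -1) ∧
    ((∀ i j, A i j = ε i * δ j * B (ρ i) (σ j)) ∨
     (∀ i j, A i j = ε i * δ j * B (σ j) (ρ i)))

/-!
Laplace expansion along the first row gives a column `j₀` whose complementary minor is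
nonsingular. Moving `j₀` to the front and then multiplying every row `i` by `A i j₀` and every
column by a suitable sign makes the first row and column all ones; the lower-right block is the
nonsingular minor rescaled by signs, and the permanent changes only by a sign.
-/

lemma mul_eq_one_or_eq_neg_one {R : Type*} [Monoid R] [HasDistribNeg R] {a b : R}
    (ha : a = 1 ∨ a = -1) (hb : b = 1 ∨ b = -1) : a * b = 1 ∨ a * b = -1 := by
  rcases ha with rfl | rfl <;> rcases hb with rfl | rfl <;> simp

section DiagonalScaling

variable {n R : Type*} [Fintype n] [DecidableEq n] [CommRing R]

lemma permanent_diagonal_mul_mul_diagonal (d e : n → R) (M : Matrix n n R) :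
    (diagonal d * M * diagonal e).permanent = (∏ i, d i) * (∏ j, e j) * M.permanent := by
  simp only [permanent, diagonal_mul, mul_diagonal, Finset.mul_sum]
  refine Finset.sum_congr rfl fun σ _ => ?_
  rw [Finset.prod_mul_distrib, Finset.prod_mul_distrib, Equiv.prod_comp σ d]
  ring

lemma submatrix_diagonal_mul_mul_diagonal {m : Type*} (d e : n → R) (M : Matrix n n R)
    (f g : m → n) [Fintype m] [DecidableEq m] :
    (diagonal d * M * diagonal e).submatrix f g =
      diagonal (d ∘ f) * M.submatrix f g * diagonal (e ∘ g) := by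
  ext i j
  simp [diagonal_mul, mul_diagonal]

lemma det_diagonal_mul_mul_diagonal_ne_zero [IsDomain R] {d e : n → R} (hd : ∀ i, d i ≠ 0)
    (he : ∀ j, e j ≠ 0) {M : Matrix n n R} (hM : M.det ≠ 0) :
    (diagonal d * M * diagonal e).det ≠ 0 := by
  simp [det_mul, Finset.prod_ne_zero_iff, hd, he, hM]

end DiagonalScaling

lemma per_eq_permanent {n : ℕ} (A : Matrix (Fin n) (Fin n) ℚ) : per A = A.permanent := by
  rw [← permanent_transpose]
  rfl

lemma stdEquiv_diagonal_mul_submatrix_mul_diagonal {n : ℕ} (A : Matrix (Fin n) (Fin n) ℚ)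
    (c : Equiv.Perm (Fin n)) {ε δ : Fin n → ℚ} (hε : ∀ i, ε i = 1 ∨ ε i = -1)
    (hδ : ∀ j, δ j = 1 ∨ δ j = -1) :
    StdEquiv A (diagonal ε * A.submatrix id c * diagonal δ) := by
  refine ⟨Equiv.refl _, c.symm, ε, δ ∘ c.symm, hε, fun j => hδ _, Or.inl fun i j => ?_⟩
  simp only [diagonal_mul, mul_diagonal, submatrix_apply, Equiv.refl_apply, id,
    Function.comp_apply, Equiv.apply_symm_apply]
  linear_combination (-(A i j) * ε i * ε i) * mul_self_eq_one_iff.mpr (hδ (c.symm j)) -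
    A i j * mul_self_eq_one_iff.mpr (hε i)

lemma exists_det_submatrix_succ_succAbove_ne_zero {R : Type*} [CommRing R] {m : ℕ}
    (A : Matrix (Fin (m + 1)) (Fin (m + 1)) R) (hA : A.det ≠ 0) :
    ∃ j : Fin (m + 1), (A.submatrix Fin.succ j.succAbove).det ≠ 0 := by
  by_contra! h
  exact hA (by simp [det_succ_row_zero, h])

lemma abs_per_diagonal_mul_submatrix_mul_diagonal {n : ℕ} (A : Matrix (Fin n) (Fin n) ℚ)
    (c : Equiv.Perm (Fin n)) {ε δ : Fin n → ℚ} (hε : ∀ i, ε i = 1 ∨ ε i = -1)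
    (hδ : ∀ j, δ j = 1 ∨ δ j = -1) :
    |per (diagonal ε * A.submatrix id c * diagonal δ)| = |per A| := by
  have habs : ∀ s : Fin n → ℚ, (∀ i, s i = 1 ∨ s i = -1) → |∏ i, s i| = 1 := fun s hs => by
    rw [Finset.abs_prod]
    exact Finset.prod_eq_one fun i _ => (abs_eq zero_le_one).mpr (hs i)
  rw [per_eq_permanent, per_eq_permanent, permanent_diagonal_mul_mul_diagonal, abs_mul, abs_mul,
    habs ε hε, habs δ hδ, permanent_permute_rows, one_mul, one_mul]

lemma diagonal_mul_mul_diagonal_apply_eq_one_or_eq_neg_one {n : ℕ}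
    {ε δ : Fin n → ℚ} (hε : ∀ i, ε i = 1 ∨ ε i = -1) (hδ : ∀ j, δ j = 1 ∨ δ j = -1)
    {M : Matrix (Fin n) (Fin n) ℚ} (hM : ∀ i j, M i j = 1 ∨ M i j = -1) (i j : Fin n) :
    (diagonal ε * M * diagonal δ) i j = 1 ∨ (diagonal ε * M * diagonal δ) i j = -1 := by
  simp only [diagonal_mul, mul_diagonal]
  exact mul_eq_one_or_eq_neg_one (mul_eq_one_or_eq_neg_one (hε i) (hM i j)) (hδ j)

lemma normalized_row_zero_and_col_zero_eq_one {m : ℕ} (M : Matrix (Fin (m + 1)) (Fin (m + 1)) ℚ)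
    (hM : ∀ i j, M i j = 1 ∨ M i j = -1) :
    let B := diagonal (fun i => M i 0) * M * diagonal (fun j => M 0 0 * M 0 j)
    (∀ j, B 0 j = 1) ∧ (∀ i, B i 0 = 1) := by
  have hsq : ∀ i j, M i j * M i j = 1 := fun i j => mul_self_eq_one_iff.mpr (hM i j)
  simp only [diagonal_mul, mul_diagonal]
  refine ⟨fun j => ?_, fun i => ?_⟩
  · linear_combination M 0 j * M 0 j * hsq 0 0 + hsq 0 j
  · linear_combination M i 0 * M i 0 * hsq 0 0 + hsq i 0

theorem reduction_lemma_general (m : ℕ)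
    (A : Matrix (Fin (m + 1)) (Fin (m + 1)) ℚ)
    (hA : ∀ i j, A i j = 1 ∨ A i j = -1) (hdet : A.det ≠ 0) :
    ∃ B : Matrix (Fin (m + 1)) (Fin (m + 1)) ℚ,
      StdEquiv A B ∧ (∀ i j, B i j = 1 ∨ B i j = -1) ∧
      (∀ j, B 0 j = 1) ∧ (∀ i, B i 0 = 1) ∧
      (B.submatrix Fin.succ Fin.succ).rank = m ∧
      |per A| = |per B| := by
  obtain ⟨j₀, hj₀⟩ := exists_det_submatrix_succ_succAbove_ne_zero A hdet
  set M := A.submatrix id j₀.cycleRange.symm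
  have hM : ∀ i j, M i j = 1 ∨ M i j = -1 := fun i j => hA _ _
  have hminor : M.submatrix Fin.succ Fin.succ = A.submatrix Fin.succ j₀.succAbove := by
    ext i j
    exact congrArg (A i.succ) (Fin.cycleRange_symm_succ j₀ j)
  set ε : Fin (m + 1) → ℚ := fun i => M i 0
  set δ : Fin (m + 1) → ℚ := fun j => M 0 0 * M 0 j
  have hε : ∀ i, ε i = 1 ∨ ε i = -1 := fun i => hM i 0
  have hδ : ∀ j, δ j = 1 ∨ δ j = -1 := fun j => mul_eq_one_or_eq_neg_one (hM 0 0) (hM 0 j)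
  obtain ⟨hrow, hcol⟩ := normalized_row_zero_and_col_zero_eq_one M hM
  have hne : ∀ {a : ℚ}, a = 1 ∨ a = -1 → a ≠ 0 := by rintro a (rfl | rfl) <;> norm_num
  have hdetB : ((diagonal ε * M * diagonal δ).submatrix Fin.succ Fin.succ).det ≠ 0 := by
    rw [submatrix_diagonal_mul_mul_diagonal, hminor]
    exact det_diagonal_mul_mul_diagonal_ne_zero (fun i => hne (hε _)) (fun j => hne (hδ _)) hj₀
  refine ⟨diagonal ε * M * diagonal δ,
    stdEquiv_diagonal_mul_submatrix_mul_diagonal A _ hε hδ,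
    diagonal_mul_mul_diagonal_apply_eq_one_or_eq_neg_one hε hδ hM,
    hrow, hcol, ?_, (abs_per_diagonal_mul_submatrix_mul_diagonal A _ hε hδ).symm⟩
  rw [rank_of_isUnit _ ((isUnit_iff_isUnit_det _).mpr hdetB.isUnit), Fintype.card_fin]

theorem reduction_lemma (m : ℕ) (hm : 1 ≤ m)
    (A : Matrix (Fin (m + 1)) (Fin (m + 1)) ℚ)
    (hA : ∀ i j, A i j = 1 ∨ A i j = -1) (hdet : A.det ≠ 0) :
    ∃ B : Matrix (Fin (m + 1)) (Fin (m + 1)) ℚ,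
      StdEquiv A B ∧ (∀ i j, B i j = 1 ∨ B i j = -1) ∧
      (∀ j, B 0 j = 1) ∧ (∀ i, B i 0 = 1) ∧
      (B.submatrix Fin.succ Fin.succ).rank = m ∧
      |per A| = |per B| :=
  reduction_lemma_general m A hA hdet
end

section
/- Let n ≥ 4 and let A be a 3×n (−1,1)-matrix of rank 3 over ℚ. Then mper A ≤ mper D_{(n,3,2)}. For n ≥ 5, equality holds if and only if A can be obtained from D_{(n,3,2)} by permutations of rows and columns and multiplications of rows or columns by −1; for n = 4, equality holds if and only if A can be obtained in this way from D_{(4,3,2)} or from D_{(4,3,3)}. -/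
/-!
A `3 × 3` matrix with entries `±1` has permanent `±6` when its columns agree up to sign and `±2`
otherwise, so `mper A = 2 C(n,3) + 4 N`, where `N` counts the triples of columns of `A` that
agree up to sign. If the classes of columns up to sign have sizes `f₁, …, f_m`, then
`N = ∑ C(f_b, 3)`, and rank `3` forces `m ≥ 3`. Since `x ↦ C(x + 1, 3)` is superadditive,
`N ≤ C(n - m + 1, 3) ≤ C(n - 2, 3)`, and equality forces all classes but one to be singletons,
with `m = 3` unless `n = 4`. After multiplying the rows by a column of the large class, each
singleton column is `±1` with a single entry negated, in pairwise distinct rows: this is the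
shape of `D_{(n,3,m-1)}`. Conversely, `N` is invariant under the moves defining `RectEquiv`.
-/

open Matrix

/-- The rectangular matrix `D_{(n,k,l)}` (`k` rows, `n` columns): `-1` on the first `l`
diagonal entries, `1` elsewhere. -/
def Dr (n k l : ℕ) : Matrix (Fin k) (Fin n) ℚ :=
  fun i j => if (i : ℕ) = (j : ℕ) ∧ (j : ℕ) < l then -1 else 1

/-- `A` is obtained from `B` by permutations of rows and columns and multiplications of
rows or columns by `-1` (rectangular case, no transposition). -/
def RectEquiv {k n : ℕ} (A B : Matrix (Fin k) (Fin n) ℚ) : Prop :=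
  ∃ (ρ : Equiv.Perm (Fin k)) (σ : Equiv.Perm (Fin n)) (ε : Fin k → ℚ) (δ : Fin n → ℚ),
    (∀ i, ε i = 1 ∨ ε i = -1) ∧ (∀ j, δ j = 1 ∨ δ j = -1) ∧
    ∀ i j, A i j = ε i * δ j * B (ρ i) (σ j)

/-- `mper A`: the sum of `|per B|` over all `k × k` submatrices `B` of a `k × n` matrix `A`
obtained by choosing `k` of the `n` columns (keeping their order). -/
def mper {k n : ℕ} (A : Matrix (Fin k) (Fin n) ℚ) : ℚ :=
  ∑ s ∈ (Finset.powersetCard k (Finset.univ : Finset (Fin n))).attach,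
    |per (A.submatrix id (s.1.orderEmbOfFin (Finset.mem_powersetCard.mp s.2).2))|

open Finset

def EqUpToSign {M : Type*} [Neg M] (u v : M) : Prop := u = v ∨ u = -v

instance {M : Type*} [Neg M] [DecidableEq M] : DecidableRel (EqUpToSign : M → M → Prop) :=
  fun _ _ => inferInstanceAs (Decidable (_ ∨ _))

section EqUpToSign

variable {M : Type*} [AddGroup M] {u v w : M}

theorem EqUpToSign.symm (h : EqUpToSign u v) : EqUpToSign v u := by
  rcases h with rfl | rfl <;> simp [EqUpToSign]

theorem EqUpToSign.trans (h₁ : EqUpToSign u v) (h₂ : EqUpToSign v w) : EqUpToSign u w := by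
  rcases h₁ with rfl | rfl <;> rcases h₂ with rfl | rfl <;> simp [EqUpToSign]

theorem eqUpToSign_comm : EqUpToSign u v ↔ EqUpToSign v u :=
  ⟨EqUpToSign.symm, EqUpToSign.symm⟩

theorem eqUpToSign_neg_left : EqUpToSign (-u) v ↔ EqUpToSign u v := by
  simp [EqUpToSign, neg_eq_iff_eq_neg, or_comm]

theorem eqUpToSign_map_iff {N F : Type*} [AddGroup N] [FunLike F M N] [AddMonoidHomClass F M N]
    (f : F) (hf : Function.Injective f) : EqUpToSign (f u) (f v) ↔ EqUpToSign u v := by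
  simp [EqUpToSign, ← map_neg, hf.eq_iff]

end EqUpToSign

theorem EqUpToSign.mul_left {R : Type*} [Ring R] {u v : R} (h : EqUpToSign u v) (a : R) :
    EqUpToSign (a * u) (a * v) := by
  rcases h with rfl | rfl
  exacts [Or.inl rfl, Or.inr (mul_neg a v)]

theorem eqUpToSign_sign_smul_left {R M : Type*} [Ring R] [AddCommGroup M] [Module R M]
    {u v : M} {c : R} (hc : c = 1 ∨ c = -1) : EqUpToSign (c • u) v ↔ EqUpToSign u v := by
  rcases hc with rfl | rfl <;> simp [eqUpToSign_neg_left]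

theorem mul_eq_one_or_neg_one {R : Type*} [Ring R] {x y : R} (hx : x = 1 ∨ x = -1) (hy : y = 1 ∨ y = -1) :
    x * y = 1 ∨ x * y = -1 := by
  rcases hx with rfl | rfl <;> rcases hy with rfl | rfl <;> simp

def signNormalize {ι : Type*} (i₀ : ι) (v : ι → ℚ) : ι → ℚ := v i₀ • v

theorem signNormalize_eq_iff {ι : Type*} {i₀ : ι} {u v : ι → ℚ} (hu : u i₀ = 1 ∨ u i₀ = -1)
    (hv : v i₀ = 1 ∨ v i₀ = -1) :
    signNormalize i₀ u = signNormalize i₀ v ↔ EqUpToSign u v := by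
  constructor
  · intro h
    have hu_eq : u = (u i₀ * v i₀) • v := by
      rw [mul_smul, ← signNormalize, ← h, signNormalize, smul_smul, mul_self_eq_one_iff.mpr hu,
        one_smul]
    rcases mul_eq_one_or_neg_one hu hv with hc | hc <;> rw [hc] at hu_eq <;>
      simp [EqUpToSign, hu_eq]
  · rintro (rfl | rfl) <;> simp [signNormalize]

theorem per_fin_three (B : Matrix (Fin 3) (Fin 3) ℚ) :
    per B = B 0 0 * B 1 1 * B 2 2 + B 0 0 * B 1 2 * B 2 1 + B 0 1 * B 1 0 * B 2 2
      + B 0 1 * B 1 2 * B 2 0 + B 0 2 * B 1 0 * B 2 1 + B 0 2 * B 1 1 * B 2 0 := by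
  have h : (univ : Finset (Equiv.Perm (Fin 3))) =
      {Equiv.refl _, Equiv.swap 1 2, Equiv.swap 0 1,
       Equiv.swap 0 1 * Equiv.swap 1 2, Equiv.swap 1 2 * Equiv.swap 0 1, Equiv.swap 0 2} := by
    decide
  rw [per, h, sum_insert (by decide), sum_insert (by decide), sum_insert (by decide),
    sum_insert (by decide), sum_insert (by decide), sum_singleton]
  simp [Fin.prod_univ_three, Equiv.swap_apply_def, Equiv.Perm.mul_apply]
  ring

theorem per_scale_cols {k : ℕ} (B : Matrix (Fin k) (Fin k) ℚ) (d : Fin k → ℚ) :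
    per (of fun i t => d t * B i t) = (∏ t, d t) * per B := by
  simp only [per, of_apply, mul_sum, prod_mul_distrib, Equiv.prod_comp]

theorem abs_per_of_row_zero_eq_one (B : Matrix (Fin 3) (Fin 3) ℚ)
    (hB : ∀ i t, B i t = 1 ∨ B i t = -1) (h0 : ∀ t, B 0 t = 1) :
    |per B| = if ∀ t, B.col t = B.col 0 then 6 else 2 := by
  simp only [funext_iff, Fin.forall_fin_succ, col_apply]
  rcases hB 1 0 with h10|h10 <;> rcases hB 1 1 with h11|h11 <;> rcases hB 1 2 with h12|h12 <;>
  rcases hB 2 0 with h20|h20 <;> rcases hB 2 1 with h21|h21 <;> rcases hB 2 2 with h22|h22 <;>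
  · simp [per_fin_three, h0, h10, h11, h12, h20, h21, h22]
    norm_num

theorem abs_per_eq (B : Matrix (Fin 3) (Fin 3) ℚ) (hB : ∀ i t, B i t = 1 ∨ B i t = -1) :
    |per B| = if ∀ t t', EqUpToSign (B.col t) (B.col t') then 6 else 2 := by
  set B' : Matrix (Fin 3) (Fin 3) ℚ := of fun i t => B 0 t * B i t
  have hscale : |per B'| = |per B| := by
    rw [per_scale_cols, abs_mul, abs_prod, prod_eq_one, one_mul]
    intro t _
    rcases hB 0 t with h | h <;> simp [h]
  have hcond : (∀ t, B'.col t = B'.col 0) ↔ ∀ t t', EqUpToSign (B.col t) (B.col t') := by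
    have hcol : ∀ t, B'.col t = signNormalize 0 (B.col t) := fun t => rfl
    simp only [hcol]
    constructor
    · intro h t t'
      rw [← signNormalize_eq_iff (u := B.col t) (v := B.col t') (hB 0 t) (hB 0 t'), h t, h t']
    · intro h t
      exact (signNormalize_eq_iff (u := B.col t) (v := B.col 0) (hB 0 t) (hB 0 0)).mpr (h t 0)
  rw [← hscale, if_congr hcond.symm rfl rfl]
  exact abs_per_of_row_zero_eq_one B' (fun i t => mul_eq_one_or_neg_one (hB 0 t) (hB i t))
    (fun t => mul_self_eq_one_iff.mpr (hB 0 t))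

def parallelTriples {m n : ℕ} (A : Matrix (Fin m) (Fin n) ℚ) : Finset (Finset (Fin n)) :=
  (powersetCard 3 univ).filter fun s => ∀ j ∈ s, ∀ k ∈ s, EqUpToSign (A.col j) (A.col k)

theorem parallelTriples_subset {m n : ℕ} (A : Matrix (Fin m) (Fin n) ℚ) :
    parallelTriples A ⊆ powersetCard 3 univ :=
  filter_subset _ _

theorem abs_per_submatrix_eq {n : ℕ} (A : Matrix (Fin 3) (Fin n) ℚ)
    (hA : ∀ i j, A i j = 1 ∨ A i j = -1) (s : Finset (Fin n)) (hs : #s = 3) :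
    |per (A.submatrix id (s.orderEmbOfFin hs))| = if s ∈ parallelTriples A then 6 else 2 := by
  rw [abs_per_eq (A.submatrix id _) (fun i t => hA _ _)]
  have hmem : ∀ j, j ∈ s ↔ ∃ t, s.orderEmbOfFin hs t = j := fun j => by
    rw [← mem_coe, ← range_orderEmbOfFin s hs, Set.mem_range]
  congr 1
  simp only [parallelTriples, mem_filter, mem_powersetCard, subset_univ, hs, true_and, hmem,
    forall_exists_index, forall_apply_eq_imp_iff]
  rfl

theorem mper_eq {n : ℕ} (A : Matrix (Fin 3) (Fin n) ℚ) (hA : ∀ i j, A i j = 1 ∨ A i j = -1) :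
    mper A = 2 * n.choose 3 + 4 * #(parallelTriples A) := by
  have hsplit : ∀ s, (if s ∈ parallelTriples A then (6 : ℚ) else 2)
      = 2 + 4 * if s ∈ parallelTriples A then 1 else 0 := fun s => by split_ifs <;> norm_num
  rw [mper, sum_congr rfl (fun s _ => abs_per_submatrix_eq A hA s.1 _),
    sum_attach (powersetCard 3 univ) (fun s => if s ∈ parallelTriples A then 6 else 2)]
  simp only [hsplit, sum_add_distrib, sum_const, ← mul_sum, sum_boole, filter_mem_eq_inter,
    inter_eq_right.mpr (parallelTriples_subset A), card_powersetCard, card_univ,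
    Fintype.card_fin, nsmul_eq_mul]
  ring

theorem eqUpToSign_col_iff {k n : ℕ} {A B : Matrix (Fin k) (Fin n) ℚ} {ρ : Equiv.Perm (Fin k)}
    {σ : Equiv.Perm (Fin n)} {ε : Fin k → ℚ} {δ : Fin n → ℚ} (hε : ∀ i, ε i = 1 ∨ ε i = -1)
    (hδ : ∀ j, δ j = 1 ∨ δ j = -1) (hAB : ∀ i j, A i j = ε i * δ j * B (ρ i) (σ j))
    (j j' : Fin n) :
    EqUpToSign (A.col j) (A.col j') ↔ EqUpToSign (B.col (σ j)) (B.col (σ j')) := by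
  let L : (Fin k → ℚ) →+ (Fin k → ℚ) :=
    AddMonoidHom.mk' (fun u i => ε i * u (ρ i)) fun u v => by ext i; simp [mul_add]
  have hL : Function.Injective L := by
    intro u v huv
    ext i
    obtain ⟨i', rfl⟩ := ρ.surjective i
    have hε0 : ε i' ≠ 0 := by rcases hε i' with h | h <;> simp [h]
    exact mul_left_cancel₀ hε0 (congrFun huv i')
  have hcol : ∀ j, A.col j = δ j • L (B.col (σ j)) := fun j => by
    ext i
    simp [L, hAB]
    ring
  rw [hcol, hcol, eqUpToSign_sign_smul_left (hδ j), eqUpToSign_comm,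
    eqUpToSign_sign_smul_left (hδ j'), eqUpToSign_comm, eqUpToSign_map_iff L hL]

theorem card_parallelTriples_eq_of_rectEquiv {k n : ℕ} {A B : Matrix (Fin k) (Fin n) ℚ}
    (h : RectEquiv A B) : #(parallelTriples A) = #(parallelTriples B) := by
  obtain ⟨ρ, σ, ε, δ, hε, hδ, hAB⟩ := h
  have hmem : ∀ s, s ∈ parallelTriples A ↔ s.map σ.toEmbedding ∈ parallelTriples B := by
    intro s
    simp only [parallelTriples, mem_filter, mem_powersetCard, subset_univ, true_and, card_map,
      mem_map, Equiv.coe_toEmbedding, forall_exists_index, and_imp, forall_apply_eq_imp_iff₂,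
      eqUpToSign_col_iff hε hδ hAB]
  refine card_nbij' (fun s => s.map σ.toEmbedding) (fun s => s.map σ.symm.toEmbedding)
    (fun s hs => (hmem s).mp hs) (fun s hs => ?_) (fun s _ => ?_) (fun s _ => ?_)
  · rw [mem_coe, hmem, Finset.map_map]
    simpa using hs
  · simp [Finset.map_map]
  · simp [Finset.map_map]

theorem Dr_sign (n k l : ℕ) (i : Fin k) (j : Fin n) : Dr n k l i j = 1 ∨ Dr n k l i j = -1 := by
  unfold Dr
  split_ifs <;> simp

theorem eqUpToSign_Dr_col_iff {n l : ℕ} (hl : l ≤ 3) (j k : Fin n) :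
    EqUpToSign ((Dr n 3 l).col j) ((Dr n 3 l).col k) ↔ j = k ∨ (l ≤ j ∧ l ≤ k) := by
  constructor
  · intro h
    by_contra hne
    rw [Fin.ext_iff] at hne
    rcases h with h | h <;>
    · have h0 := congrFun h 0
      have h1 := congrFun h 1
      have h2 := congrFun h 2
      simp only [Pi.neg_apply, col_apply, Dr, Fin.val_zero, Fin.val_one, Fin.val_two] at h0 h1 h2
      split_ifs at h0 h1 h2 <;> first | omega | linarith
  · rintro (rfl | ⟨hj, hk⟩)
    · exact Or.inl rfl
    · left
      ext i
      simp only [col_apply, Dr]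
      rw [if_neg (by omega), if_neg (by omega)]

theorem card_filter_le_val (n l : ℕ) : #(univ.filter fun j : Fin n => l ≤ (j : ℕ)) = n - l := by
  rw [← card_map Fin.valEmbedding]
  have : (univ.filter fun j : Fin n => l ≤ (j : ℕ)).map Fin.valEmbedding = Ico l n := by
    ext x; simp [Fin.exists_iff]
  simp [this]

theorem card_parallelTriples_Dr {n l : ℕ} (hl : l ≤ 3) :
    #(parallelTriples (Dr n 3 l)) = (n - l).choose 3 := by
  have : parallelTriples (Dr n 3 l)
      = powersetCard 3 (univ.filter fun j : Fin n => l ≤ (j : ℕ)) := by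
    ext s
    simp only [parallelTriples, mem_filter, mem_powersetCard, subset_univ, true_and,
      eqUpToSign_Dr_col_iff hl]
    rw [subset_iff]
    simp only [mem_filter, mem_univ, true_and]
    constructor
    · rintro ⟨hs, h⟩
      refine ⟨fun j hj => ?_, hs⟩
      obtain ⟨k, hk, hkj⟩ := exists_mem_ne (by omega : 1 < #s) j
      exact ((h j hj k hk).resolve_left hkj.symm).1
    · rintro ⟨hsub, hs⟩
      exact ⟨hs, fun j hj k hk => Or.inr ⟨hsub hj, hsub hk⟩⟩
  rw [this, card_powersetCard, card_filter_le_val]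

theorem choose_three_succ (m : ℕ) : (m + 1).choose 3 = m.choose 2 + m.choose 3 :=
  Nat.choose_succ_succ m 2

theorem choose_three_succ_add_le (x y : ℕ) :
    (x + 1).choose 3 + (y + 1).choose 3 ≤ (x + y + 1).choose 3 := by
  induction y with
  | zero => simp [Nat.choose_eq_zero_of_lt]
  | succ y ih =>
    have h2 : (y + 1).choose 2 ≤ (x + y + 1).choose 2 := Nat.choose_le_choose 2 (by omega)
    rw [show x + (y + 1) + 1 = (x + y + 1) + 1 by omega, choose_three_succ (x + y + 1),
      choose_three_succ (y + 1)]
    omega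

theorem choose_three_succ_add_lt {x y : ℕ} (hx : 0 < x) (hy : 0 < y) :
    (x + 1).choose 3 + (y + 1).choose 3 < (x + y + 1).choose 3 := by
  obtain ⟨y, rfl⟩ : ∃ z, y = z + 1 := ⟨y - 1, by omega⟩
  have hle := choose_three_succ_add_le x y
  have h2 : (y + 1).choose 2 ≤ (x + y).choose 2 := Nat.choose_le_choose 2 (by omega)
  have h2' : (x + y).choose 2 < (x + y + 1).choose 2 := by
    rw [show (x + y + 1).choose 2 = (x + y).choose 1 + (x + y).choose 2 from
      Nat.choose_succ_succ _ _, Nat.choose_one_right]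
    omega
  rw [choose_three_succ (y + 1), show x + (y + 1) + 1 = x + y + 1 + 1 by ring,
    choose_three_succ (x + y + 1)]
  omega

section SumChooseThree

variable {ι : Type*}

theorem sum_choose_three_succ_le (T : Finset ι) (y : ι → ℕ) :
    ∑ b ∈ T, (y b + 1).choose 3 ≤ (∑ b ∈ T, y b + 1).choose 3 := by
  classical
  induction T using Finset.induction_on with
  | empty => simp
  | insert a T ha ih =>
    rw [sum_insert ha, sum_insert ha, add_assoc]
    exact (Nat.add_le_add_left ih _).trans (choose_three_succ_add_le _ _)

theorem sum_choose_three_succ_lt [DecidableEq ι] {T : Finset ι} {y : ι → ℕ}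
    {a b : ι} (ha : a ∈ T) (hb : b ∈ T) (hab : a ≠ b) (hya : 0 < y a) (hyb : 0 < y b) :
    ∑ c ∈ T, (y c + 1).choose 3 < (∑ c ∈ T, y c + 1).choose 3 := by
  have hb' : b ∈ T.erase a := mem_erase.mpr ⟨hab.symm, hb⟩
  set R := (T.erase a).erase b
  have hsplit : ∀ g : ι → ℕ, ∑ c ∈ T, g c = g a + g b + ∑ c ∈ R, g c := fun g => by
    rw [← add_sum_erase T _ ha, ← add_sum_erase _ _ hb', add_assoc]
  rw [hsplit, hsplit]
  calc (y a + 1).choose 3 + (y b + 1).choose 3 + ∑ c ∈ R, (y c + 1).choose 3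
      ≤ (y a + 1).choose 3 + (y b + 1).choose 3 + (∑ c ∈ R, y c + 1).choose 3 :=
        Nat.add_le_add_left (sum_choose_three_succ_le R y) _
    _ < (y a + y b + 1).choose 3 + (∑ c ∈ R, y c + 1).choose 3 :=
        Nat.add_lt_add_right (choose_three_succ_add_lt hya hyb) _
    _ ≤ (y a + y b + ∑ c ∈ R, y c + 1).choose 3 := choose_three_succ_add_le _ _

variable {T : Finset ι} {f : ι → ℕ}

theorem sum_eq_sum_sub_one_add_card (hf : ∀ b ∈ T, 0 < f b) :
    ∑ b ∈ T, f b = ∑ b ∈ T, (f b - 1) + #T := by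
  rw [card_eq_sum_ones, ← sum_add_distrib]
  exact sum_congr rfl fun b hb => (Nat.sub_add_cancel (hf b hb)).symm

theorem sum_choose_three_eq_sum_sub_one (hf : ∀ b ∈ T, 0 < f b) :
    ∑ b ∈ T, (f b).choose 3 = ∑ b ∈ T, (f b - 1 + 1).choose 3 :=
  sum_congr rfl fun b hb => by rw [Nat.sub_add_cancel (hf b hb)]

theorem sum_choose_three_le (hf : ∀ b ∈ T, 0 < f b) (hT : 3 ≤ #T) :
    ∑ b ∈ T, (f b).choose 3 ≤ (∑ b ∈ T, f b - 2).choose 3 := by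
  rw [sum_choose_three_eq_sum_sub_one hf, sum_eq_sum_sub_one_add_card hf]
  exact (sum_choose_three_succ_le T _).trans (Nat.choose_le_choose 3 (by omega))

theorem card_eq_three_or_sum_le_four_of_sum_choose_three_eq (hf : ∀ b ∈ T, 0 < f b)
    (hT : 3 ≤ #T) (heq : ∑ b ∈ T, (f b).choose 3 = (∑ b ∈ T, f b - 2).choose 3) :
    #T = 3 ∨ ∑ b ∈ T, f b ≤ 4 := by
  rw [sum_choose_three_eq_sum_sub_one hf] at heq
  rw [sum_eq_sum_sub_one_add_card hf] at heq ⊢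
  by_contra! hcon
  set m := ∑ b ∈ T, (f b - 1) + #T - 3
  have hle : (∑ b ∈ T, (f b - 1) + 1).choose 3 ≤ m.choose 3 :=
    Nat.choose_le_choose 3 (by omega)
  have hpos : 0 < m.choose 2 := Nat.choose_pos (by omega)
  have hsucc := choose_three_succ m
  rw [show ∑ b ∈ T, (f b - 1) + #T - 2 = m + 1 by omega] at heq
  have := sum_choose_three_succ_le T (fun b => f b - 1)
  omega

theorem exists_eq_one_of_sum_choose_three_eq [DecidableEq ι] (hf : ∀ b ∈ T, 0 < f b)
    (hT : 3 ≤ #T) (heq : ∑ b ∈ T, (f b).choose 3 = (∑ b ∈ T, f b - 2).choose 3) :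
    ∃ b₀ ∈ T, ∀ b ∈ T, b ≠ b₀ → f b = 1 := by
  by_contra! hcon
  obtain ⟨b₀, hb₀⟩ : T.Nonempty := card_pos.mp (by omega)
  obtain ⟨b₁, hb₁, -, hf₁⟩ := hcon b₀ hb₀
  obtain ⟨b₂, hb₂, h₂₁, hf₂⟩ := hcon b₁ hb₁
  have hlt := sum_choose_three_succ_lt (y := fun b => f b - 1) hb₁ hb₂ h₂₁.symm
    (by have := hf b₁ hb₁; omega) (by have := hf b₂ hb₂; omega)
  rw [sum_choose_three_eq_sum_sub_one hf, sum_eq_sum_sub_one_add_card hf] at heq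
  have hle : (∑ b ∈ T, (f b - 1) + 1).choose 3 ≤ (∑ b ∈ T, (f b - 1) + #T - 2).choose 3 :=
    Nat.choose_le_choose 3 (by omega)
  omega

end SumChooseThree

section ColumnClasses

variable {m n : ℕ} (A : Matrix (Fin (m + 1)) (Fin n) ℚ)

def colClasses : Finset (Fin (m + 1) → ℚ) :=
  univ.image fun j => signNormalize 0 (A.col j)

def colFiber (b : Fin (m + 1) → ℚ) : Finset (Fin n) :=
  univ.filter fun j => signNormalize 0 (A.col j) = b

theorem card_colFiber_pos {b : Fin (m + 1) → ℚ} (hb : b ∈ colClasses A) :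
    0 < #(colFiber A b) := by
  obtain ⟨j, -, rfl⟩ := mem_image.mp hb
  exact card_pos.mpr ⟨j, by simp [colFiber]⟩

theorem sum_card_colFiber : ∑ b ∈ colClasses A, #(colFiber A b) = n := by
  simp only [colClasses, colFiber]
  rw [← card_eq_sum_card_image, card_univ, Fintype.card_fin]

variable {A} (hA : ∀ i j, A i j = 1 ∨ A i j = -1)
include hA

theorem signNormalize_col_eq_iff (j k : Fin n) :
    signNormalize 0 (A.col j) = signNormalize 0 (A.col k) ↔ EqUpToSign (A.col j) (A.col k) :=
  signNormalize_eq_iff (hA 0 j) (hA 0 k)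

theorem rank_le_card_colClasses : A.rank ≤ #(colClasses A) := by
  rw [rank_eq_finrank_span_cols]
  refine (Submodule.finrank_mono (Submodule.span_le.mpr ?_)).trans
    (finrank_span_finset_le_card (colClasses A))
  rintro _ ⟨j, rfl⟩
  have hcol : A.col j = A 0 j • signNormalize 0 (A.col j) := by
    rw [signNormalize, smul_smul, col_apply, mul_self_eq_one_iff.mpr (hA 0 j), one_smul]
  rw [hcol]
  exact Submodule.smul_mem _ _ (Submodule.subset_span (mem_image_of_mem _ (mem_univ j)))

theorem card_parallelTriples_eq_sum :
    #(parallelTriples A) = ∑ b ∈ colClasses A, (#(colFiber A b)).choose 3 := by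
  have : parallelTriples A = (colClasses A).biUnion fun b => powersetCard 3 (colFiber A b) := by
    ext s
    simp only [parallelTriples, mem_filter, mem_powersetCard, subset_univ, true_and, mem_biUnion,
      colClasses, mem_image, mem_univ]
    have hfib : ∀ {j k},
        k ∈ colFiber A (signNormalize 0 (A.col j)) ↔ EqUpToSign (A.col k) (A.col j) := by
      simp [colFiber, signNormalize_col_eq_iff hA]
    constructor
    · rintro ⟨hs, h⟩
      obtain ⟨j, hj⟩ : s.Nonempty := card_pos.mp (by omega)
      exact ⟨_, ⟨j, rfl⟩, fun k hk => hfib.mpr (h k hk j hj), hs⟩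
    · rintro ⟨_, ⟨j, rfl⟩, hsub, hs⟩
      exact ⟨hs, fun k hk k' hk' => (hfib.mp (hsub hk)).trans (hfib.mp (hsub hk')).symm⟩
  rw [this, card_biUnion]
  · simp [card_powersetCard]
  · intro b _ b' _ hbb'
    refine disjoint_left.mpr fun s hs hs' => hbb' ?_
    rw [mem_powersetCard] at hs hs'
    obtain ⟨j, hj⟩ : s.Nonempty := card_pos.mp (by omega)
    exact (mem_filter.mp (hs.1 hj)).2.symm.trans (mem_filter.mp (hs'.1 hj)).2

theorem eq_of_eqUpToSign_of_card_colFiber_eq_one {j₀ : Fin n}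
    (hone : ∀ b ∈ colClasses A, b ≠ signNormalize 0 (A.col j₀) → #(colFiber A b) = 1)
    {j k : Fin n} (hj : ¬EqUpToSign (A.col j) (A.col j₀)) (hjk : EqUpToSign (A.col j) (A.col k)) :
    j = k := by
  have hne : signNormalize 0 (A.col j) ≠ signNormalize 0 (A.col j₀) :=
    fun h => hj ((signNormalize_col_eq_iff hA j j₀).mp h)
  refine card_le_one.mp (hone _ (mem_image_of_mem _ (mem_univ j)) hne).le j
    (by simp [colFiber]) k ?_
  simp [colFiber, (signNormalize_col_eq_iff hA k j).mpr hjk.symm]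

theorem card_filter_not_eqUpToSign_of_card_colFiber_eq_one {j₀ : Fin n}
    (hone : ∀ b ∈ colClasses A, b ≠ signNormalize 0 (A.col j₀) → #(colFiber A b) = 1) :
    #(univ.filter fun j => ¬EqUpToSign (A.col j) (A.col j₀)) = #(colClasses A) - 1 := by
  have hb₀ : signNormalize 0 (A.col j₀) ∈ colClasses A := mem_image_of_mem _ (mem_univ j₀)
  have hsum := sum_card_colFiber A
  rw [← add_sum_erase _ _ hb₀, sum_congr rfl fun b hb => hone b (mem_of_mem_erase hb)
    (ne_of_mem_erase hb), sum_const, card_erase_of_mem hb₀, smul_eq_mul, mul_one] at hsum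
  have hsplit := card_filter_add_card_filter_not (s := univ)
    fun j => signNormalize 0 (A.col j) = signNormalize 0 (A.col j₀)
  rw [card_univ, Fintype.card_fin] at hsplit
  simp only [signNormalize_col_eq_iff hA] at hsplit ⊢
  simp only [colFiber, signNormalize_col_eq_iff hA] at hsum
  omega

end ColumnClasses

theorem rectEquiv_of_forall_eqUpToSign {k n : ℕ} {A B : Matrix (Fin k) (Fin n) ℚ}
    (ρ : Equiv.Perm (Fin k)) (σ : Equiv.Perm (Fin n)) {ε : Fin k → ℚ}
    (hε : ∀ i, ε i = 1 ∨ ε i = -1)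
    (h : ∀ j, EqUpToSign (A.col j) (ε * fun i => B (ρ i) (σ j))) : RectEquiv A B := by
  refine ⟨ρ, σ, ε, fun j => if A.col j = (ε * fun i => B (ρ i) (σ j)) then 1 else -1, hε,
    fun j => ?_, fun i j => ?_⟩ <;> dsimp only
  · split_ifs <;> simp
  split_ifs with hj
  · simpa using congrFun hj i
  · simpa using congrFun ((h j).resolve_left hj) i

def oddRow (w : Fin 3 → ℚ) : Fin 3 :=
  if w 1 = w 2 then 0 else if w 0 = w 2 then 1 else 2

theorem eqUpToSign_update_oddRow {w : Fin 3 → ℚ} (hw : ∀ i, w i = 1 ∨ w i = -1)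
    (h : ¬EqUpToSign w 1) : EqUpToSign w (Function.update 1 (oddRow w) (-1)) := by
  rcases hw 0 with h0 | h0 <;> rcases hw 1 with h1 | h1 <;> rcases hw 2 with h2 | h2 <;>
  simp +decide [EqUpToSign, oddRow, funext_iff, Fin.forall_fin_succ,
    Function.update_apply, h0, h1, h2] at h ⊢

theorem rectEquiv_Dr_of_eqUpToSign {n l : ℕ} {A : Matrix (Fin 3) (Fin n) ℚ} {ε : Fin 3 → ℚ}
    (hε : ∀ i, ε i = 1 ∨ ε i = -1) {p : Fin l → Fin n} (hp : Function.Injective p)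
    {r : Fin l → Fin 3} (hr : Function.Injective r)
    (hodd : ∀ t, EqUpToSign (A.col (p t)) (ε * Function.update (1 : Fin 3 → ℚ) (r t) (-1)))
    (hgen : ∀ j ∉ Set.range p, EqUpToSign (A.col j) ε) : RectEquiv A (Dr n 3 l) := by
  have hl3 : l ≤ 3 := by simpa using Fintype.card_le_of_injective r hr
  have hln : l ≤ n := by simpa using Fintype.card_le_of_injective p hp
  obtain ⟨ρ, hρ⟩ :=
    Equiv.Perm.exists_extending_pair r (Fin.castLE hl3) hr (Fin.castLE_injective hl3)
  obtain ⟨σ, hσ⟩ :=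
    Equiv.Perm.exists_extending_pair p (Fin.castLE hln) hp (Fin.castLE_injective hln)
  refine rectEquiv_of_forall_eqUpToSign ρ σ hε fun j => ?_
  by_cases hj : j ∈ Set.range p
  · obtain ⟨t, rfl⟩ := hj
    convert hodd t using 2
    ext i
    have hrow : (ρ i : ℕ) = t ↔ i = r t := by
      rw [← ρ.injective.eq_iff, hρ t, Fin.ext_iff, Fin.val_castLE]
    simp [Dr, hσ, Function.update_apply, hrow]
  · have hge : l ≤ (σ j : ℕ) := by
      by_contra! hlt
      exact hj ⟨⟨σ j, hlt⟩, σ.injective (by rw [hσ]; rfl)⟩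
    convert hgen j hj using 1
    ext i
    simp [Dr, hge.not_gt]

theorem rectEquiv_Dr_card_filter_not_eqUpToSign {n : ℕ} {A : Matrix (Fin 3) (Fin n) ℚ}
    (hA : ∀ i j, A i j = 1 ∨ A i j = -1) (j₀ : Fin n)
    (hinj : ∀ j k, ¬EqUpToSign (A.col j) (A.col j₀) → EqUpToSign (A.col j) (A.col k) → j = k) :
    RectEquiv A (Dr n 3 #(univ.filter fun j => ¬EqUpToSign (A.col j) (A.col j₀))) := by
  set P := univ.filter fun j => ¬EqUpToSign (A.col j) (A.col j₀)
  set p := P.orderEmbOfFin rfl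
  have hP : ∀ t, ¬EqUpToSign (A.col (p t)) (A.col j₀) := fun t =>
    (mem_filter.mp (P.orderEmbOfFin_mem rfl t)).2
  set w : Fin #P → Fin 3 → ℚ := fun t => A.col j₀ * A.col (p t)
  have hcol : ∀ t, A.col (p t) = A.col j₀ * w t := fun t => by
    have hsq : A.col j₀ * A.col j₀ = 1 := funext fun i => mul_self_eq_one_iff.mpr (hA i j₀)
    rw [← mul_assoc, hsq, one_mul]
  have hodd : ∀ t, EqUpToSign (A.col (p t))
      (A.col j₀ * Function.update (1 : Fin 3 → ℚ) (oddRow (w t)) (-1)) := fun t => by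
    have hw1 : ¬EqUpToSign (w t) 1 := fun h =>
      hP t (by simpa [← hcol t] using h.mul_left (A.col j₀))
    have hw : ∀ i, w t i = 1 ∨ w t i = -1 := fun i => mul_eq_one_or_neg_one (hA i j₀) (hA i (p t))
    rw [hcol]
    exact (eqUpToSign_update_oddRow hw hw1).mul_left _
  refine rectEquiv_Dr_of_eqUpToSign (fun i => hA i j₀) p.injective (r := fun t => oddRow (w t))
    (fun t t' htt' => ?_) hodd fun j hj => ?_
  · have ht := hodd t
    rw [show oddRow (w t) = oddRow (w t') from htt'] at ht
    exact p.injective (hinj _ _ (hP t) (ht.trans (hodd t').symm))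
  · by_contra h
    rw [range_orderEmbOfFin] at hj
    exact hj (mem_coe.mpr (mem_filter.mpr ⟨mem_univ j, h⟩))

theorem card_parallelTriples_le {n : ℕ} {A : Matrix (Fin 3) (Fin n) ℚ}
    (hA : ∀ i j, A i j = 1 ∨ A i j = -1) (hrk : 3 ≤ A.rank) :
    #(parallelTriples A) ≤ (n - 2).choose 3 := by
  have := sum_choose_three_le (fun b hb => card_colFiber_pos A hb)
    (hrk.trans (rank_le_card_colClasses hA))
  rwa [sum_card_colFiber, ← card_parallelTriples_eq_sum hA] at this

theorem rectEquiv_Dr_of_card_parallelTriples_eq {n : ℕ} {A : Matrix (Fin 3) (Fin n) ℚ}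
    (hA : ∀ i j, A i j = 1 ∨ A i j = -1) (hrk : 3 ≤ A.rank)
    (heq : #(parallelTriples A) = (n - 2).choose 3) :
    RectEquiv A (Dr n 3 2) ∨ (n = 4 ∧ RectEquiv A (Dr n 3 3)) := by
  have hf : ∀ b ∈ colClasses A, 0 < #(colFiber A b) := fun b hb => card_colFiber_pos A hb
  have hT : 3 ≤ #(colClasses A) := hrk.trans (rank_le_card_colClasses hA)
  have hTn : #(colClasses A) ≤ n := card_image_le.trans (by simp)
  replace heq : ∑ b ∈ colClasses A, (#(colFiber A b)).choose 3
      = (∑ b ∈ colClasses A, #(colFiber A b) - 2).choose 3 := by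
    rw [sum_card_colFiber, ← card_parallelTriples_eq_sum hA, heq]
  have hcases := card_eq_three_or_sum_le_four_of_sum_choose_three_eq hf hT heq
  rw [sum_card_colFiber] at hcases
  obtain ⟨_, hb₀, hone⟩ := exists_eq_one_of_sum_choose_three_eq hf hT heq
  obtain ⟨j₀, -, rfl⟩ := mem_image.mp hb₀
  have key := rectEquiv_Dr_card_filter_not_eqUpToSign hA j₀
    fun j k => eq_of_eqUpToSign_of_card_colFiber_eq_one hA hone
  rw [card_filter_not_eqUpToSign_of_card_colFiber_eq_one hA hone] at key
  by_cases h3 : #(colClasses A) = 3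
  · exact Or.inl (by rwa [h3] at key)
  · have h4 : #(colClasses A) = 4 := by omega
    exact Or.inr ⟨by omega, by rwa [h4] at key⟩

theorem mper_Dr {n l : ℕ} (hl : l ≤ 3) :
    mper (Dr n 3 l) = 2 * n.choose 3 + 4 * (n - l).choose 3 := by
  rw [mper_eq _ (Dr_sign n 3 l), card_parallelTriples_Dr hl]

theorem mper_eq_of_rectEquiv {n : ℕ} {A B : Matrix (Fin 3) (Fin n) ℚ}
    (hA : ∀ i j, A i j = 1 ∨ A i j = -1) (hB : ∀ i j, B i j = 1 ∨ B i j = -1)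
    (h : RectEquiv A B) : mper A = mper B := by
  rw [mper_eq A hA, mper_eq B hB, card_parallelTriples_eq_of_rectEquiv h]

theorem mper_bound_three_rows_general (n : ℕ)
    (A : Matrix (Fin 3) (Fin n) ℚ) (hA : ∀ i j, A i j = 1 ∨ A i j = -1)
    (hrk : A.rank = 3) :
    mper A ≤ mper (Dr n 3 2) ∧
      (5 ≤ n → (mper A = mper (Dr n 3 2) ↔ RectEquiv A (Dr n 3 2))) ∧
      (n = 4 → (mper A = mper (Dr n 3 2) ↔
        RectEquiv A (Dr n 3 2) ∨ RectEquiv A (Dr n 3 3))) := by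
  have hle := card_parallelTriples_le hA hrk.ge
  have heq_iff : mper A = mper (Dr n 3 2) ↔ #(parallelTriples A) = (n - 2).choose 3 := by
    rw [mper_eq A hA, mper_Dr (by norm_num)]
    norm_cast
    omega
  have hstruct := fun h => rectEquiv_Dr_of_card_parallelTriples_eq hA hrk.ge (heq_iff.mp h)
  have hD : ∀ {l}, RectEquiv A (Dr n 3 l) → mper A = mper (Dr n 3 l) :=
    mper_eq_of_rectEquiv hA (Dr_sign n 3 _)
  refine ⟨?_, fun hn => ⟨fun h => ?_, hD⟩,
    fun hn => ⟨fun h => (hstruct h).imp_right And.right, ?_⟩⟩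
  · rw [mper_eq A hA, mper_Dr (by norm_num)]
    exact_mod_cast (by omega : 2 * n.choose 3 + 4 * #(parallelTriples A)
      ≤ 2 * n.choose 3 + 4 * (n - 2).choose 3)
  · exact (hstruct h).resolve_right fun h4 => by omega
  · rintro (h | h)
    · exact hD h
    · rw [hD h, mper_Dr (by norm_num), mper_Dr (by norm_num), hn]
      rfl

theorem mper_bound_three_rows (n : ℕ) (hn : 4 ≤ n)
    (A : Matrix (Fin 3) (Fin n) ℚ) (hA : ∀ i j, A i j = 1 ∨ A i j = -1)
    (hrk : A.rank = 3) :
    mper A ≤ mper (Dr n 3 2) ∧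
      (5 ≤ n → (mper A = mper (Dr n 3 2) ↔ RectEquiv A (Dr n 3 2))) ∧
      (n = 4 → (mper A = mper (Dr n 3 2) ↔
        RectEquiv A (Dr n 3 2) ∨ RectEquiv A (Dr n 3 3))) :=
  mper_bound_three_rows_general n A hA hrk
end
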